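/- For every natural number d, the torus game 𝒯₃(d) is not a Player II win: Player I has a strategy guaranteeing that at no point does his claimed set contain a line unless Player II's claimed set already contained a line earlier. -/

import Mathlib

/-- A strategy: given the history of moves so far (in chronological order),
choose the next point to claim. -/
abbrev Strategy (X : Type*) := List X → X

/-- A strategy is valid if, whenever the history has no repeats and the board is
not yet full, it picks a previously unclaimed point. -/
def ValidStrategy {X : Type*} [Fintype X] (s : Strategy X) : Prop :=
  ∀ h : List X, h.Nodup → h.length < Fintype.card X → s h ∉ h

/-- The play (history of moves) after `k` moves, when Player I uses `sI`
(moving at even times) and Player II uses `sII` (moving at odd times). -/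
def play {X : Type*} (sI sII : Strategy X) : ℕ → List X
  | 0 => []
  | k + 1 =>
      let h := play sI sII k
      h ++ [if k % 2 = 0 then sI h else sII h]

/-- The set of points claimed by Player I in a history: the moves at even positions. -/
def claimedI {X : Type*} (h : List X) : Set X :=
  { x | ∃ i : ℕ, i % 2 = 0 ∧ h[i]? = some x }

/-- The set of points claimed by Player II in a history: the moves at odd positions. -/
def claimedII {X : Type*} (h : List X) : Set X :=
  { x | ∃ i : ℕ, i % 2 = 1 ∧ h[i]? = some x }

/-- A set of points contains a line of `ℒ`. -/
def ContainsLine {X : Type*} (ℒ : Set (Finset X)) (S : Set X) : Prop :=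
  ∃ L ∈ ℒ, ↑L ⊆ S

/-- The avoidance game with lines `ℒ` is a Player I win: Player I has a valid strategy
such that against every valid strategy of Player II there is a moment at which
Player II's claimed set contains a line while Player I's claimed set does not
(by monotonicity of the claimed sets, this says exactly that Player II's set comes
to contain a line strictly before Player I's set does). -/
def PIWin {X : Type*} [Fintype X] (ℒ : Set (Finset X)) : Prop :=
  ∃ sI : Strategy X, ValidStrategy sI ∧
    ∀ sII : Strategy X, ValidStrategy sII →
      ∃ k ≤ Fintype.card X,
        ContainsLine ℒ (claimedII (play sI sII k)) ∧
        ¬ ContainsLine ℒ (claimedI (play sI sII k))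

/-- A permutation of the board is an automorphism of the game if it maps the
family of lines onto itself. -/
def IsGameAuto {X : Type*} [DecidableEq X] (ℒ : Set (Finset X)) (g : Equiv.Perm X) : Prop :=
  ∀ L : Finset X, L ∈ ℒ ↔ L.image g ∈ ℒ

/-- The game is transitive if its automorphism group acts transitively on the board. -/
def TransitiveGame {X : Type*} [DecidableEq X] (ℒ : Set (Finset X)) : Prop :=
  ∀ x y : X, ∃ g : Equiv.Perm X, IsGameAuto ℒ g ∧ g x = y

/-- The avoidance game with lines `ℒ` is a Player II win: Player II has a valid
strategy such that against every valid strategy of Player I there is a moment at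
which Player I's claimed set contains a line while Player II's claimed set does not
(by monotonicity of the claimed sets, this says exactly that Player I's set comes to
contain a line strictly before Player II's set does). -/
def PIIWin {X : Type*} [Fintype X] (ℒ : Set (Finset X)) : Prop :=
  ∃ sII : Strategy X, ValidStrategy sII ∧
    ∀ sI : Strategy X, ValidStrategy sI →
      ∃ k ≤ Fintype.card X,
        ContainsLine ℒ (claimedI (play sI sII k)) ∧
        ¬ ContainsLine ℒ (claimedII (play sI sII k))

/-- The lines of the torus game `𝒯_q(d)`: all sets of the form
`{x, x+y, x+2y, …, x+(q−1)y}` with `x, y ∈ (ℤ/q)^d` and `y ≠ 0`. -/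
def torusLines (q d : ℕ) : Set (Finset (Fin d → ZMod q)) :=
  { L | ∃ x y : Fin d → ZMod q, y ≠ 0 ∧
      L = Finset.image (fun k : Fin q => x + (k : ℕ) • y) Finset.univ }

/-!
Player I claims `0` first and then answers every move `x` of Player II by `-x`. Since `q` is odd,
`-x = x` only for `x = 0`, so this reply is always free, and after each of Player I's moves his
points are `0` together with the negatives of Player II's points, while Player II never holds both
`u` and `-u`. A line of Player I avoiding `0` is then the negative of a line of Player II, and a
line through `0` consists of the multiples of its direction `y`, so it contains both `y` and `-y`,
whose negatives Player II would both hold.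
-/

section Histories

variable {X : Type*}

@[simp] lemma claimedI_nil : claimedI ([] : List X) = ∅ := by
  simp [claimedI]

@[simp] lemma claimedII_nil : claimedII ([] : List X) = ∅ := by
  simp [claimedII]

lemma List.getElem?_concat_eq_some {h : List X} {x y : X} {i : ℕ} :
    (h ++ [x])[i]? = some y ↔ h[i]? = some y ∨ i = h.length ∧ x = y := by
  rcases lt_trichotomy i h.length with hi | rfl | hi
  · simp [List.getElem?_append_left hi, hi.ne]
  · simp
  · simp [List.getElem?_eq_none (by simpa using hi : (h ++ [x]).length ≤ i),
      List.getElem?_eq_none hi.le, hi.ne']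

lemma claimedI_append_singleton (h : List X) (x : X) :
    claimedI (h ++ [x]) = if h.length % 2 = 0 then insert x (claimedI h) else claimedI h := by
  ext y
  simp only [claimedI, List.getElem?_concat_eq_some]
  split_ifs <;> grind

lemma claimedII_append_singleton (h : List X) (x : X) :
    claimedII (h ++ [x]) = if h.length % 2 = 1 then insert x (claimedII h) else claimedII h := by
  ext y
  simp only [claimedII, List.getElem?_concat_eq_some]
  split_ifs <;> grind

lemma mem_iff_mem_claimedI_or_mem_claimedII (h : List X) (x : X) :
    x ∈ h ↔ x ∈ claimedI h ∨ x ∈ claimedII h := by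
  simp only [List.mem_iff_getElem?, claimedI, claimedII, Set.mem_ofPred_eq]
  constructor
  · rintro ⟨i, hi⟩
    rcases Nat.mod_two_eq_zero_or_one i with h2 | h2
    exacts [.inl ⟨i, h2, hi⟩, .inr ⟨i, h2, hi⟩]
  · rintro (⟨i, -, hi⟩ | ⟨i, -, hi⟩) <;> exact ⟨i, hi⟩

lemma play_length (sI sII : Strategy X) : ∀ k, (play sI sII k).length = k
  | 0 => rfl
  | k + 1 => by simp [play, play_length sI sII k]

lemma play_succ_of_even {sI sII : Strategy X} {k : ℕ} (hk : k % 2 = 0) :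
    play sI sII (k + 1) = play sI sII k ++ [sI (play sI sII k)] := by
  simp [play, hk]

lemma play_succ_of_odd {sI sII : Strategy X} {k : ℕ} (hk : k % 2 = 1) :
    play sI sII (k + 1) = play sI sII k ++ [sII (play sI sII k)] := by
  simp [play, hk]

end Histories

section Strategies

variable {X : Type*}

open Classical in
noncomputable def legalize (s : Strategy X) : Strategy X := fun h =>
  if s h ∉ h then s h else if hx : ∃ x, x ∉ h then hx.choose else s h

lemma legalize_of_not_mem {s : Strategy X} {h : List X} (hs : s h ∉ h) : legalize s h = s h :=
  if_pos hs

lemma validStrategy_legalize [Fintype X] (s : Strategy X) : ValidStrategy (legalize s) := by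
  intro h _ hlen
  have hfree : ∃ x, x ∉ h :=
    Cardinal.exists_notMem_of_length_lt h (by rw [Cardinal.mk_fintype]; exact_mod_cast hlen)
  unfold legalize
  split_ifs with hs
  · exact hfree.choose_spec
  · exact hs

noncomputable def mirrorStrategy (σ : X → X) (c : X) : Strategy X :=
  legalize fun h => h.getLast?.elim c σ

lemma mirrorStrategy_nil (σ : X → X) (c : X) : mirrorStrategy σ c [] = c :=
  legalize_of_not_mem List.not_mem_nil

lemma mirrorStrategy_concat {σ : X → X} {c : X} {h : List X} {x : X} (hx : σ x ∉ h ++ [x]) :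
    mirrorStrategy σ c (h ++ [x]) = σ x := by
  unfold mirrorStrategy
  rw [legalize_of_not_mem] <;> simp [hx]

end Strategies

section Mirror

variable {X : Type*} {σ : X → X} {c : X}

/-- The positions reached by `mirrorStrategy σ c` after each of Player I's moves. -/
structure IsMirrorPosition (σ : X → X) (c : X) (h : List X) : Prop where
  nodup : h.Nodup
  claimedI_eq : claimedI h = insert c (σ '' claimedII h)
  pairFree : ∀ u ∈ claimedII h, σ u ∉ claimedII h

lemma isMirrorPosition_singleton : IsMirrorPosition σ c [c] := by
  have hI : claimedI [c] = {c} := by simpa using claimedI_append_singleton [] c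
  have hII : claimedII [c] = ∅ := by simpa using claimedII_append_singleton [] c
  exact ⟨List.nodup_singleton c, by simp [hI, hII], by simp [hII]⟩

lemma IsMirrorPosition.mirror_not_mem (hσ : Function.Involutive σ)
    (hfix : ∀ x, σ x = x ↔ x = c) {h : List X} (hpos : IsMirrorPosition σ c h) {x : X}
    (hx : x ∉ h) : σ x ∉ h ++ [x] := by
  rw [mem_iff_mem_claimedI_or_mem_claimedII, not_or] at hx
  obtain ⟨hxI, hxII⟩ := hx
  have hxc : x ≠ c := fun hxc => hxI (hpos.claimedI_eq ▸ .inl hxc)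
  intro hmem
  rcases List.mem_append.mp hmem with hmem | hmem
  · rcases (mem_iff_mem_claimedI_or_mem_claimedII h _).mp hmem with hI | hII
    · rw [hpos.claimedI_eq] at hI
      rcases hI with hc | ⟨b, hb, hbx⟩
      · exact hxc (by rw [← hσ x, hc, (hfix c).2 rfl])
      · exact hxII (hσ.injective hbx ▸ hb)
    · exact hxI (hpos.claimedI_eq ▸ .inr ⟨σ x, hII, hσ x⟩)
  · exact hxc ((hfix x).1 (List.mem_singleton.mp hmem))

lemma IsMirrorPosition.concat_mirror (hσ : Function.Involutive σ)
    (hfix : ∀ x, σ x = x ↔ x = c) {h : List X} (hpos : IsMirrorPosition σ c h)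
    (hodd : h.length % 2 = 1) {x : X} (hx : x ∉ h) :
    IsMirrorPosition σ c (h ++ [x] ++ [σ x]) := by
  have hσx := hpos.mirror_not_mem hσ hfix hx
  have hxI : x ∉ claimedI h := fun hI =>
    hx ((mem_iff_mem_claimedI_or_mem_claimedII h x).2 (.inl hI))
  have hσxII : σ x ∉ claimedII h := fun hII =>
    hσx (List.mem_append_left _ ((mem_iff_mem_claimedI_or_mem_claimedII h _).2 (.inr hII)))
  have hσxx : σ x ≠ x := fun e => hσx (List.mem_append_right _ (List.mem_singleton.2 e))
  have hlen : (h ++ [x]).length % 2 = 0 := by simp; omega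
  have hII : claimedII (h ++ [x] ++ [σ x]) = insert x (claimedII h) := by
    rw [claimedII_append_singleton, if_neg (by omega), claimedII_append_singleton, if_pos hodd]
  refine ⟨?_, ?_, ?_⟩
  · simpa only [List.concat_eq_append] using
      (hpos.nodup.concat hx).concat (by simpa only [List.concat_eq_append] using hσx)
  · rw [hII, claimedI_append_singleton, if_pos hlen, claimedI_append_singleton, if_neg (by omega),
      hpos.claimedI_eq, Set.image_insert_eq, Set.insert_comm]
  · rw [hII]
    rintro u (rfl | hu) hσu
    · exact hσu.elim hσxx hσxII
    · rcases hσu with e | hσu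
      · exact hxI (hpos.claimedI_eq ▸ .inr ⟨u, hu, e⟩)
      · exact hpos.pairFree u hu hσu

lemma IsMirrorPosition.mirror_mem_claimedII (hσ : Function.Involutive σ) {h : List X}
    (hpos : IsMirrorPosition σ c h) {a : X} (ha : a ∈ claimedI h) (hac : a ≠ c) :
    σ a ∈ claimedII h := by
  rw [hpos.claimedI_eq] at ha
  obtain ⟨b, hb, rfl⟩ := ha.resolve_left hac
  rwa [hσ b]

lemma ContainsLine.mono {ℒ : Set (Finset X)} {S T : Set X} (hST : S ⊆ T) :
    ContainsLine ℒ S → ContainsLine ℒ T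
  | ⟨L, hL, hLS⟩ => ⟨L, hL, hLS.trans hST⟩

lemma IsMirrorPosition.containsLine_claimedII [DecidableEq X] {ℒ : Set (Finset X)}
    (hσ : Function.Involutive σ) (hfix : ∀ x, σ x = x ↔ x = c)
    (hℒ : ∀ L ∈ ℒ, L.image σ ∈ ℒ) (hcentre : ∀ L ∈ ℒ, c ∈ L → ∃ u ∈ L, u ≠ c ∧ σ u ∈ L)
    {h : List X} (hpos : IsMirrorPosition σ c h) (hI : ContainsLine ℒ (claimedI h)) :
    ContainsLine ℒ (claimedII h) := by
  obtain ⟨L, hL, hLI⟩ := hI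
  by_cases hcL : c ∈ L
  · obtain ⟨u, hu, huc, hσu⟩ := hcentre L hL hcL
    have hσuc : σ u ≠ c := fun e => huc (by rw [← hσ u, e, (hfix c).2 rfl])
    have hσσu := hpos.mirror_mem_claimedII hσ (hLI hσu) hσuc
    rw [hσ u] at hσσu
    exact (hpos.pairFree u hσσu (hpos.mirror_mem_claimedII hσ (hLI hu) huc)).elim
  · refine ⟨L.image σ, hℒ L hL, ?_⟩
    rw [Finset.coe_image]
    rintro _ ⟨a, ha, rfl⟩
    exact hpos.mirror_mem_claimedII hσ (hLI ha) (ne_of_mem_of_not_mem ha hcL)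

lemma isMirrorPosition_play [Fintype X] (hσ : Function.Involutive σ)
    (hfix : ∀ x, σ x = x ↔ x = c) {sII : Strategy X} (hsII : ValidStrategy sII) :
    ∀ m, 2 * m ≤ Fintype.card X →
      IsMirrorPosition σ c (play (mirrorStrategy σ c) sII (2 * m + 1))
  | 0, _ => by
    rw [play_succ_of_even rfl]
    simpa [play, mirrorStrategy_nil] using isMirrorPosition_singleton
  | m + 1, hm => by
    have hpos := isMirrorPosition_play hσ hfix hsII m (by omega)
    set P := play (mirrorStrategy σ c) sII (2 * m + 1)
    have hx : sII P ∉ P := hsII P hpos.nodup (by rw [play_length]; omega)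
    rw [show 2 * (m + 1) + 1 = 2 * m + 1 + 1 + 1 by ring, play_succ_of_even (by omega),
      play_succ_of_odd (by omega), mirrorStrategy_concat (hpos.mirror_not_mem hσ hfix hx)]
    exact hpos.concat_mirror hσ hfix (by rw [play_length]; omega) hx

theorem not_PIIWin_of_involution [Fintype X] [DecidableEq X] {ℒ : Set (Finset X)}
    (hσ : Function.Involutive σ) (hfix : ∀ x, σ x = x ↔ x = c)
    (hℒ : ∀ L ∈ ℒ, L.image σ ∈ ℒ) (hcentre : ∀ L ∈ ℒ, c ∈ L → ∃ u ∈ L, u ≠ c ∧ σ u ∈ L) :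
    ¬ PIIWin ℒ := by
  rintro ⟨sII, hsII, hwin⟩
  obtain ⟨k, hk, hI, hII⟩ := hwin (mirrorStrategy σ c) (validStrategy_legalize _)
  obtain ⟨m, rfl | rfl⟩ := Nat.even_or_odd' k
  · -- Player I's (possibly fictitious) next move only enlarges his set.
    set P := play (mirrorStrategy σ c) sII (2 * m)
    have hpos : IsMirrorPosition σ c (P ++ [mirrorStrategy σ c P]) := by
      simpa only [play_succ_of_even (show 2 * m % 2 = 0 by omega)] using
        isMirrorPosition_play hσ hfix hsII m hk
    have hlen : P.length % 2 = 0 := by rw [play_length]; omega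
    have hI' := hI.mono (show claimedI P ⊆ claimedI (P ++ [mirrorStrategy σ c P]) by
      rw [claimedI_append_singleton, if_pos hlen]; exact Set.subset_insert _ _)
    have hII' := hpos.containsLine_claimedII hσ hfix hℒ hcentre hI'
    rw [claimedII_append_singleton, if_neg (by omega)] at hII'
    exact hII hII'
  · exact hII ((isMirrorPosition_play hσ hfix hsII m (by omega)).containsLine_claimedII
      hσ hfix hℒ hcentre hI)

end Mirror

section Torus

lemma neg_eq_self_iff_of_odd {q : ℕ} (hq : Odd q) {M : Type*} [AddCommGroup M]
    [Module (ZMod q) M] (v : M) : -v = v ↔ v = 0 := by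
  refine ⟨fun h => ?_, fun h => by rw [h, neg_zero]⟩
  obtain ⟨r, rfl⟩ := hq
  have hvv : v + v = 0 := by rw [← neg_add_cancel v, h]
  have hchar : (2 * r + 1) • v = 0 := by
    rw [← Nat.cast_smul_eq_nsmul (ZMod (2 * r + 1)), ZMod.natCast_self, zero_smul]
  calc v = (r + 1) • (v + v) - (2 * r + 1) • v := by module
    _ = 0 := by rw [hvv, hchar, smul_zero, sub_zero]

variable {q d : ℕ}

lemma image_neg_mem_torusLines {L : Finset (Fin d → ZMod q)} (hL : L ∈ torusLines q d) :
    L.image Neg.neg ∈ torusLines q d := by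
  obtain ⟨x, y, hy, rfl⟩ := hL
  refine ⟨-x, -y, neg_ne_zero.2 hy, ?_⟩
  rw [Finset.image_image]
  congr 1
  funext k
  rw [Function.comp_apply, neg_add, smul_neg]

variable [NeZero q]

lemma mem_torusLine_iff {x y a : Fin d → ZMod q} :
    a ∈ Finset.image (fun k : Fin q => x + (k : ℕ) • y) Finset.univ ↔
      ∃ t : ZMod q, a = x + t • y := by
  simp only [Finset.mem_image, Finset.mem_univ, true_and]
  constructor
  · rintro ⟨k, rfl⟩
    exact ⟨k, by rw [Nat.cast_smul_eq_nsmul]⟩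
  · rintro ⟨t, rfl⟩
    exact ⟨⟨t.val, t.val_lt⟩, by rw [← Nat.cast_smul_eq_nsmul (ZMod q), ZMod.natCast_zmod_val]⟩

lemma exists_neg_mem_of_zero_mem_torusLines {L : Finset (Fin d → ZMod q)}
    (hL : L ∈ torusLines q d) (h0 : 0 ∈ L) : ∃ u ∈ L, u ≠ 0 ∧ -u ∈ L := by
  obtain ⟨x, y, hy, rfl⟩ := hL
  obtain ⟨n, hn⟩ := mem_torusLine_iff.1 h0
  exact ⟨y, mem_torusLine_iff.2 ⟨n + 1, by linear_combination (norm := module) hn⟩, hy,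
    mem_torusLine_iff.2 ⟨n - 1, by linear_combination (norm := module) hn⟩⟩

theorem torusLines_not_PIIWin (hq : Odd q) : ¬ PIIWin (torusLines q d) :=
  not_PIIWin_of_involution neg_involutive (neg_eq_self_iff_of_odd hq)
    (fun _ => image_neg_mem_torusLines) (fun _ => exists_neg_mem_of_zero_mem_torusLines)

end Torus

/-- For every natural number `d`, the torus game `𝒯₃(d)` is not a Player II win. -/
theorem statement11 (d : ℕ) : ¬ PIIWin (torusLines 3 d) :=
  torusLines_not_PIIWin (by decide)
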